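/- The subgroup U_O of units of O has finite index in the group U_{Õ} of units of the normalization Õ, provided δ = dim_k(Õ/O) is finite. -/

import Mathlib

/-!
As `k` is finite and `δ < ∞`, `Õ / O` is a finite set. Hence the conductor
`𝔠 = {x ∈ Õ | x Õ ⊆ O}` has finite index in `Õ`: inside `O` it is cut out by the finitely many
conditions `x r ∈ O`, one for each representative `r` of a class of `Õ / O`. Every unit of `Õ`
congruent to `1` modulo the ideal `𝔠 ⊆ O` is a unit of `O`, so `U_O` contains the kernel of
`U_Õ → (Õ / 𝔠)ˣ`, a finite group.
-/

namespace Subalgebra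

variable {k R : Type*} [CommRing k] [CommRing R] [Algebra k R] (O : Subalgebra k R)

def conductor : Ideal R where
  carrier := {x | ∀ r, x * r ∈ O}
  add_mem' ha hb r := by simpa only [add_mul] using add_mem (ha r) (hb r)
  zero_mem' r := by simpa only [zero_mul] using O.zero_mem
  smul_mem' c x hx r := by simpa only [smul_eq_mul, mul_assoc, mul_left_comm] using hx (c * r)

theorem mem_of_mem_conductor {x : R} (hx : x ∈ O.conductor) : x ∈ O := by
  simpa only [mul_one] using hx 1

theorem finite_quotient_conductor [Finite (R ⧸ toSubmodule O)] : Finite (R ⧸ O.conductor) := by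
  set A := (toSubmodule O).toAddSubgroup
  have : A.FiniteIndex := @AddSubgroup.finiteIndex_of_finite_quotient _ _ _
    (inferInstanceAs (Finite (R ⧸ toSubmodule O)))
  let φ : R →+ (R ⧸ A → R ⧸ A) :=
    AddMonoidHom.pi fun q => (QuotientAddGroup.mk' A).comp (AddMonoidHom.mulRight q.out)
  have : O.conductor.toAddSubgroup.FiniteIndex := by
    refine AddSubgroup.finiteIndex_of_le (H := φ.ker ⊓ A) fun x ⟨hxφ, hxO⟩ r => ?_
    have hout : x * (r : R ⧸ A).out ∈ O :=
      (QuotientAddGroup.eq_zero_iff _).mp (congrFun hxφ (r : R ⧸ A))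
    have hdiff : r - (r : R ⧸ A).out ∈ O := by
      rw [← neg_add_eq_sub]
      exact (QuotientAddGroup.eq (s := A)).mp (QuotientAddGroup.out_eq' (r : R ⧸ A))
    have hsplit : x * r = x * (r : R ⧸ A).out + x * (r - (r : R ⧸ A).out) := by ring
    exact hsplit ▸ add_mem hout (mul_mem hxO hdiff)
  exact inferInstanceAs (Finite (R ⧸ O.conductor.toAddSubgroup))

theorem mem_range_unitsMap {u : Rˣ} (hu : (u : R) ∈ O) (hu' : ((u⁻¹ : Rˣ) : R) ∈ O) :
    u ∈ (Units.map (O.val : O →* R)).range :=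
  ⟨⟨⟨u, hu⟩, ⟨_, hu'⟩, Subtype.ext u.mul_inv, Subtype.ext u.inv_mul⟩, rfl⟩

theorem finiteIndex_range_unitsMap {I : Ideal R} (hI : ∀ x ∈ I, x ∈ O) [Finite (R ⧸ I)] :
    (Units.map (O.val : O →* R)).range.FiniteIndex := by
  refine Subgroup.finiteIndex_of_le (H := (Units.map (Ideal.Quotient.mk I : R →* R ⧸ I)).ker)
    fun u hu => ?_
  have hu1 : (u : R) - 1 ∈ I := by
    rw [← Ideal.Quotient.eq, map_one]
    exact congrArg Units.val (MonoidHom.mem_ker.mp hu)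
  refine O.mem_range_unitsMap ?_ ?_
  · simpa only [add_sub_cancel] using add_mem O.one_mem (hI _ hu1)
  · have hinv : ((u⁻¹ : Rˣ) : R) = 1 - ((u : R) - 1) * (u⁻¹ : Rˣ) := by
      rw [sub_mul, Units.mul_inv, one_mul, sub_sub_cancel]
    exact hinv ▸ sub_mem O.one_mem (hI _ (I.mul_mem_right _ hu1))

end Subalgebra

theorem unit_index_finite_general {k R : Type*} [Field k] [Fintype k]
    [CommRing R] [Algebra k R]
    (O : Subalgebra k R)
    -- `δ = dim_k(Õ/O) < ∞`
    [Module.Finite k (R ⧸ Subalgebra.toSubmodule O)] :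
    Finite (Rˣ ⧸ (Units.map (O.val : O →* R)).range) := by
  have : Finite (R ⧸ Subalgebra.toSubmodule O) := Module.finite_of_finite k
  have := O.finite_quotient_conductor
  have := O.finiteIndex_range_unitsMap fun _ => O.mem_of_mem_conductor
  infer_instance

/-- For a reduced one-dimensional Noetherian local `k`-algebra `O` (with
`k` a finite field) inside its normalization `R = Õ` (a finite `O`-module), if
`δ = dim_k(Õ/O)` is finite then the unit group `U_O` has finite index in `U_Õ`. -/
theorem unit_index_finite {k R : Type*} [Field k] [Fintype k]
    [CommRing R] [IsNoetherianRing R] [IsReduced R] [Algebra k R]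
    (O : Subalgebra k R)
    -- `O` is local
    (hloc : IsLocalRing O)
    -- `R` is the normalization of `O`: it is integral over `O`
    (hint : ∀ x : R, IsIntegral O x)
    -- `δ = dim_k(Õ/O) < ∞`
    [Module.Finite k (R ⧸ Subalgebra.toSubmodule O)] :
    Finite (Rˣ ⧸ (Units.map (O.val : O →* R)).range) :=
  unit_index_finite_general O
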